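/- arXiv:2511.10839 — 2 statements merged into one kernel-verified Lean document; each statement's English description precedes it below -/
import Mathlib

section
/- The n-qubit Ising loop Hamiltonian H_3 = -∑_{i=1}^{n-1} Z_i Z_{i+1} - Z_n Z_1 is unitarily equivalent, via a product of CNOT gates, to the parity-check Hamiltonian H_4 = -∑_{i=1}^{n-1} Z_i - ∏_{i=1}^{n-1} Z_i. -/
open Matrix

noncomputable section

/-- The CNOT gate on an `n`-qubit register, with control `c` and target `t`,
as the permutation matrix of `x ↦ x` with the target bit replaced by `x t + x c`. -/
def CNOT (n : ℕ) (c t : Fin n) :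
    Matrix (Fin n → Fin 2) (Fin n → Fin 2) ℂ :=
  Matrix.of fun x y => if x = Function.update y t (y t + y c) then 1 else 0

/-- The Z-type Pauli operator `∏_{i ∈ s} Z_i` on an `n`-qubit register. -/
def ZPauli (n : ℕ) (s : Finset (Fin n)) :
    Matrix (Fin n → Fin 2) (Fin n → Fin 2) ℂ :=
  Matrix.diagonal fun x => (-1 : ℂ) ^ (∑ i ∈ s, (x i : ℕ))

/-- The X-type Pauli operator `∏_{i ∈ s} X_i` on an `n`-qubit register. -/
def XPauli (n : ℕ) (s : Finset (Fin n)) :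
    Matrix (Fin n → Fin 2) (Fin n → Fin 2) ℂ :=
  Matrix.of fun x y => if (∀ i, x i = y i + if i ∈ s then 1 else 0) then 1 else 0

/-- `U` is a product of CNOT gates. -/
def IsCNOTProduct (n : ℕ) (U : Matrix (Fin n → Fin 2) (Fin n → Fin 2) ℂ) : Prop :=
  ∃ l : List (Fin n × Fin n), (∀ p ∈ l, p.1 ≠ p.2) ∧
    U = (l.map fun p => CNOT n p.1 p.2).prod

/-!
A product of CNOT gates is the permutation matrix of a bijection `σ` of bit strings, and
conjugating the diagonal operator `Z_s` by it replaces the parity `∑_{i ∈ s} x_i` by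
`∑_{i ∈ s} (σ⁻¹ x)_i`. The gates `CX(j+1, j)`, applied for `j = 0, …, n`, send `y` to its
sequence of adjacent differences `δ y` (`(δ y)_j = y_j + y_{j+1}`, the last bit kept). Writing
`x = δ y`, the parity of `y` on `{j, j+1}` is `x_j`, and by telescoping its parity on
`{last, 0}` is the parity of `x` on all bits but the last.
-/

open Equiv Finset

lemma Fin.val_sum {ι : Type*} {m : ℕ} [NeZero m] (s : Finset ι) (v : ι → Fin m) :
    ((∑ i ∈ s, v i : Fin m) : ℕ) = (∑ i ∈ s, (v i : ℕ)) % m := by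
  classical
  induction s using Finset.induction_on with
  | empty => simp
  | insert a s ha ih => rw [sum_insert ha, sum_insert ha, Fin.val_add, ih, Nat.add_mod_mod]

lemma neg_one_pow_sum_val {R ι : Type*} [Ring R] (s : Finset ι) (v : ι → Fin 2) :
    (-1 : R) ^ (∑ i ∈ s, (v i : ℕ)) = (-1) ^ ((∑ i ∈ s, v i : Fin 2) : ℕ) := by
  rw [Fin.val_sum, ← neg_one_pow_eq_pow_mod_two]

lemma Fin.two_add_self (a : Fin 2) : a + a = 0 := by
  decide +revert

lemma Fin.two_sub_eq_add (a b : Fin 2) : a - b = a + b := by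
  decide +revert

namespace Matrix

variable {ι R : Type*} [DecidableEq ι] [Fintype ι] [CommRing R]

lemma inv_permMatrixHom (σ : Perm ι) : (permMatrixHom (R := R) σ)⁻¹ = permMatrixHom σ⁻¹ :=
  inv_eq_right_inv (by rw [← map_mul, mul_inv_cancel, map_one])

lemma permMatrixHom_mul_diagonal_mul_inv (σ : Perm ι) (d : ι → R) :
    permMatrixHom σ * diagonal d * (permMatrixHom σ)⁻¹ = diagonal (d ∘ σ.symm) := by
  rw [inv_permMatrixHom, permMatrixHom_apply, permMatrixHom_apply, inv_inv,
    PEquiv.toMatrix_toPEquiv_mul, PEquiv.mul_toMatrix_toPEquiv, submatrix_submatrix,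
    Function.id_comp, Function.comp_id, Perm.inv_def, submatrix_diagonal_equiv]

end Matrix

lemma permMatrixHom_mul_ZPauli_mul_inv {N : ℕ} (σ : Perm (Fin N → Fin 2))
    {s t : Finset (Fin N)} (h : ∀ y, ∑ i ∈ s, y i = ∑ i ∈ t, σ y i) :
    permMatrixHom σ * ZPauli N s * (permMatrixHom σ)⁻¹ = ZPauli N t := by
  rw [ZPauli, permMatrixHom_mul_diagonal_mul_inv, ZPauli]
  congr 1
  funext x
  rw [Function.comp_apply, neg_one_pow_sum_val, neg_one_pow_sum_val, h, Equiv.apply_symm_apply]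

def cnotPerm {N : ℕ} (c t : Fin N) (h : c ≠ t) : Perm (Fin N → Fin 2) :=
  Function.Involutive.toPerm (fun y => Function.update y t (y t + y c)) fun y => by
    simp [Function.update_of_ne h, add_assoc, Fin.two_add_self]

@[simp]
lemma cnotPerm_apply {N : ℕ} {c t : Fin N} (h : c ≠ t) (y : Fin N → Fin 2) :
    cnotPerm c t h y = Function.update y t (y t + y c) :=
  rfl

lemma CNOT_eq_permMatrixHom {N : ℕ} {c t : Fin N} (h : c ≠ t) :
    CNOT N c t = permMatrixHom (cnotPerm c t h) := by
  ext x y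
  simp [CNOT, PEquiv.toMatrix_apply, Equiv.eq_symm_apply, eq_comm]

lemma IsCNOTProduct.one (N : ℕ) : IsCNOTProduct N 1 :=
  ⟨[], by simp, by simp⟩

lemma IsCNOTProduct.cnot_mul {N : ℕ} {c t : Fin N} (h : c ≠ t) {U} (hU : IsCNOTProduct N U) :
    IsCNOTProduct N (CNOT N c t * U) := by
  obtain ⟨l, hl, rfl⟩ := hU
  exact ⟨(c, t) :: l, by simpa [h] using hl, by simp⟩

open Fin.NatCast

section AdjacentDifference

variable {n : ℕ}

lemma Fin.add_one_ne_self (j : Fin (n + 2)) : j + 1 ≠ j := by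
  simp

def partialAdjDiff : ℕ → Perm (Fin (n + 2) → Fin 2)
  | 0 => 1
  | k + 1 => cnotPerm ((k : Fin (n + 2)) + 1) k (Fin.add_one_ne_self _) * partialAdjDiff k

lemma partialAdjDiff_apply {k : ℕ} (hk : k ≤ n + 1) (y : Fin (n + 2) → Fin 2)
    (j : Fin (n + 2)) :
    partialAdjDiff k y j = if (j : ℕ) < k then y j + y (j + 1) else y j := by
  induction k generalizing j with
  | zero => simp [partialAdjDiff]
  | succ k ih =>
    have hkv : ((k : Fin (n + 2)) : ℕ) = k := Fin.val_cast_of_lt (by omega)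
    have hk1v : ((k : Fin (n + 2)) + 1 : Fin (n + 2)).val = k + 1 := by
      rw [Fin.val_add_one_of_lt (by rw [Fin.lt_def, hkv, Fin.val_last]; omega), hkv]
    rw [partialAdjDiff, Perm.mul_apply, cnotPerm_apply]
    by_cases hj : j = k
    · subst hj
      simp [ih (by omega), hkv, hk1v]
    · have hjv : (j : ℕ) ≠ k := fun h => hj (by rw [← Fin.cast_val_eq_self j, h])
      rw [Function.update_of_ne hj, ih (by omega)]
      simp only [show (j : ℕ) < k + 1 ↔ (j : ℕ) < k by omega]

lemma isCNOTProduct_permMatrixHom_partialAdjDiff (k : ℕ) :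
    IsCNOTProduct (n + 2) (permMatrixHom (partialAdjDiff (n := n) k)) := by
  induction k with
  | zero => simpa [partialAdjDiff] using IsCNOTProduct.one _
  | succ k ih =>
    rw [partialAdjDiff, map_mul, ← CNOT_eq_permMatrixHom]
    exact ih.cnot_mul (Fin.add_one_ne_self _)

variable (n) in
abbrev adjDiff : Perm (Fin (n + 2) → Fin 2) :=
  partialAdjDiff (n + 1)

lemma adjDiff_apply_castSucc (y : Fin (n + 2) → Fin 2) (i : Fin (n + 1)) :
    adjDiff n y i.castSucc = y i.castSucc + y i.succ := by
  rw [adjDiff, partialAdjDiff_apply le_rfl, if_pos (by simp [Fin.is_le]), Fin.coeSucc_eq_succ]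

lemma sum_compl_last_adjDiff (y : Fin (n + 2) → Fin 2) :
    ∑ i ∈ {Fin.last (n + 1)}ᶜ, adjDiff n y i = y (Fin.last (n + 1)) + y 0 := by
  have hsplit := sum_compl_add_sum {Fin.last (n + 1)} (adjDiff n y)
  rw [Fin.sum_univ_castSucc, sum_singleton, add_left_inj] at hsplit
  calc ∑ i ∈ {Fin.last (n + 1)}ᶜ, adjDiff n y i
      = ∑ i : Fin (n + 1), adjDiff n y i.castSucc := hsplit
    _ = ∑ i ∈ Iic (Fin.last n), (y i.succ - y i.castSucc) := by
      rw [show Iic (Fin.last n) = univ from Iic_top]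
      simp only [adjDiff_apply_castSucc, Fin.two_sub_eq_add, add_comm]
    _ = y (Fin.last (n + 1)) + y 0 := by
      rw [Fin.sum_Iic_sub, Fin.succ_last, Fin.two_sub_eq_add]

end AdjacentDifference

/-- On an `(n+2)`-qubit register, the Ising loop
`H₃ = -∑_{i=1}^{n+1} Z_i Z_{i+1} - Z_{n+2} Z_1` is unitarily equivalent, via a product of
CNOT gates, to the parity-check Hamiltonian `H₄ = -∑_{i=1}^{n+1} Z_i - ∏_{i=1}^{n+1} Z_i`
(whose product term acts trivially on the last qubit). -/
theorem stmt10 (n : ℕ) :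
    ∃ U : Matrix (Fin (n + 2) → Fin 2) (Fin (n + 2) → Fin 2) ℂ,
      IsCNOTProduct (n + 2) U ∧
      U * (-(∑ i : Fin (n + 1), ZPauli (n + 2) {i.castSucc, i.succ})
            - ZPauli (n + 2) {Fin.last (n + 1), 0}) * U⁻¹
        = -(∑ i : Fin (n + 1), ZPauli (n + 2) {i.castSucc})
            - ZPauli (n + 2) ({Fin.last (n + 1)}ᶜ) := by
  refine ⟨permMatrixHom (adjDiff n), isCNOTProduct_permMatrixHom_partialAdjDiff _, ?_⟩
  have conj {s t : Finset (Fin (n + 2))} (h : ∀ y, ∑ i ∈ s, y i = ∑ i ∈ t, adjDiff n y i) :=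
    permMatrixHom_mul_ZPauli_mul_inv (adjDiff n) h
  simp only [mul_sub, sub_mul, mul_neg, neg_mul, mul_sum, sum_mul]
  congr 2
  · refine sum_congr rfl fun i _ => conj fun y => ?_
    rw [sum_pair Fin.castSucc_lt_succ.ne, sum_singleton, adjDiff_apply_castSucc]
  · refine conj fun y => ?_
    rw [sum_pair (Fin.last_pos.ne'), sum_compl_last_adjDiff]
end
end

section
/- Joining two Ising chains: conjugating the Hamiltonian H = -Z_1 - ∑_{i=1}^{k} Z_i Z_{i+1} - Z_{k+2} - ∑_{i=k+2}^{m-1} Z_i Z_{i+1} on m qubits by the depth-1 commuting gateset ∏_{i=k+2}^{m} CX(k+1, i) yields H' = -Z_1 - ∑_{i=1}^{m-1} Z_i Z_{i+1}. -/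
/-!
All gates share the control `k`, so their product is the permutation matrix of the bit map
`x ↦ x + x_k · 1_T`, `T` being the qubits after `k`. Conjugation by it sends the diagonal operator
`Z_S` to `Z_S Z_k^{|S ∩ T|}`: the field `Z_{k+1}` becomes the joining bond `Z_k Z_{k+1}`, the bonds
of the second chain meet `T` twice and are unchanged, and the first chain does not meet `T` at all.
-/

open Matrix

noncomputable section

section PermMatrix

variable {m R : Type*} [Fintype m] [DecidableEq m] [CommRing R]

theorem Matrix.inv_permMatrix (σ : Equiv.Perm m) : (σ.permMatrix R)⁻¹ = σ⁻¹.permMatrix R :=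
  inv_eq_right_inv <| by rw [← permMatrix_mul, inv_mul_cancel, permMatrix_one]

theorem Matrix.permMatrix_mul_diagonal_mul_inv (σ : Equiv.Perm m) (d : m → R) :
    σ.permMatrix R * diagonal d * (σ.permMatrix R)⁻¹ = diagonal (d ∘ σ) := by
  rw [inv_permMatrix, PEquiv.toMatrix_toPEquiv_mul, PEquiv.mul_toMatrix_toPEquiv,
    submatrix_submatrix, Equiv.Perm.inv_def, Equiv.symm_symm]
  exact submatrix_diagonal_equiv d σ

end PermMatrix

variable {n : ℕ}

/-- The action on basis states of the fan-out `∏_{t ∈ T} CX(c, t)`. -/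
def fanOut (c : Fin n) (T : Finset (Fin n)) (x : Fin n → Fin 2) : Fin n → Fin 2 :=
  fun j => x j + if j ∈ T then x c else 0

lemma fanOut_apply_self {c : Fin n} {T : Finset (Fin n)} (hc : c ∉ T) (x : Fin n → Fin 2) :
    fanOut c T x c = x c := by
  simp [fanOut, hc]

lemma fanOut_involutive {c : Fin n} {T : Finset (Fin n)} (hc : c ∉ T) :
    Function.Involutive (fanOut c T) := by
  intro x
  funext j
  rw [fanOut, fanOut_apply_self hc]
  by_cases hj : j ∈ T <;> simp [fanOut, hj]
  omega

lemma fanOut_fanOut {c : Fin n} {S T : Finset (Fin n)} (hc : c ∉ S) (hST : Disjoint S T)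
    (x : Fin n → Fin 2) : fanOut c T (fanOut c S x) = fanOut c (S ∪ T) x := by
  funext j
  rw [fanOut, fanOut_apply_self hc]
  by_cases hjS : j ∈ S
  · simp [fanOut, hjS, Finset.disjoint_left.mp hST hjS]
  · by_cases hjT : j ∈ T <;> simp [fanOut, hjS, hjT]

def fanOutPerm (c : Fin n) (T : Finset (Fin n)) (hc : c ∉ T) : Equiv.Perm (Fin n → Fin 2) :=
  (fanOut_involutive hc).toPerm

lemma CNOT_eq_permMatrix {c t : Fin n} (h : c ≠ t) :
    CNOT n c t = (fanOutPerm c {t} (Finset.notMem_singleton.mpr h)).permMatrix ℂ := by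
  have hupdate : ∀ y : Fin n → Fin 2,
      Function.update y t (y t + y c) = fanOut c {t} y := fun y => by
    funext j
    by_cases hj : j = t
    · subst hj; simp [fanOut]
    · simp [fanOut, hj]
  have hinv := fanOut_involutive (Finset.notMem_singleton.mpr h)
  ext x y
  simp only [CNOT, of_apply, hupdate, PEquiv.toMatrix_apply, Equiv.toPEquiv_apply, Option.mem_def,
    Option.some.injEq, fanOutPerm, Function.Involutive.coe_toPerm]
  exact if_congr ⟨fun hx => hx ▸ hinv y, fun hy => hy ▸ (hinv x).symm⟩ rfl rfl

lemma prod_map_CNOT_eq_permMatrix (c : Fin n) (L : List (Fin n)) (hc : c ∉ L) (hL : L.Nodup) :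
    (L.map (CNOT n c)).prod =
      (fanOutPerm c L.toFinset (List.mem_toFinset.not.mpr hc)).permMatrix ℂ := by
  induction L with
  | nil =>
    rw [List.map_nil, List.prod_nil, ← permMatrix_one]
    congr 1
    ext x j
    simp [fanOutPerm, fanOut]
  | cons t L ih =>
    obtain ⟨hct, hcL⟩ := List.ne_and_not_mem_of_not_mem_cons hc
    obtain ⟨htL, hL⟩ := List.nodup_cons.mp hL
    rw [List.map_cons, List.prod_cons, ih hcL hL, CNOT_eq_permMatrix hct, ← permMatrix_mul]
    congr 1
    ext x : 1
    simp only [Equiv.Perm.mul_apply, fanOutPerm, Function.Involutive.coe_toPerm]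
    rw [fanOut_fanOut (Finset.notMem_singleton.mpr hct) (by simpa using htL), List.toFinset_cons,
      Finset.insert_eq]

lemma neg_one_pow_fin_two_add {R : Type*} [Ring R] (a b : Fin 2) :
    (-1 : R) ^ ((a + b : Fin 2) : ℕ) = (-1) ^ (a : ℕ) * (-1) ^ (b : ℕ) := by
  rw [Fin.val_add, ← pow_add, ← neg_one_pow_eq_pow_mod_two]

lemma neg_one_pow_sum_fanOut (c : Fin n) (S T : Finset (Fin n)) (x : Fin n → Fin 2) :
    (-1 : ℂ) ^ (∑ i ∈ S, (fanOut c T x i : ℕ)) =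
      (-1) ^ (∑ i ∈ S, (x i : ℕ)) * ((-1) ^ (x c : ℕ)) ^ (S ∩ T).card := by
  simp only [← Finset.prod_pow_eq_pow_sum, fanOut, neg_one_pow_fin_two_add, Finset.prod_mul_distrib]
  congr 1
  rw [← Finset.prod_const, ← Finset.prod_ite_mem]
  exact Finset.prod_congr rfl fun i _ => by split_ifs <;> simp

theorem fanOut_conj_ZPauli (c : Fin n) (T : Finset (Fin n)) (hc : c ∉ T) (S : Finset (Fin n)) :
    (fanOutPerm c T hc).permMatrix ℂ * ZPauli n S * ((fanOutPerm c T hc).permMatrix ℂ)⁻¹ =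
      ZPauli n S * ZPauli n {c} ^ (S ∩ T).card := by
  simp only [ZPauli, permMatrix_mul_diagonal_mul_inv, diagonal_pow, diagonal_mul_diagonal]
  congr 1
  funext x
  simp [fanOutPerm, neg_one_pow_sum_fanOut]

lemma ZPauli_mul_self (S : Finset (Fin n)) : ZPauli n S * ZPauli n S = 1 := by
  rw [ZPauli, diagonal_mul_diagonal, ← diagonal_one]
  congr 1
  funext x
  rw [← pow_add, ← two_mul, pow_mul, neg_one_sq, one_pow]

lemma ZPauli_mul_of_disjoint {S T : Finset (Fin n)} (h : Disjoint S T) :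
    ZPauli n S * ZPauli n T = ZPauli n (S ∪ T) := by
  simp only [ZPauli, diagonal_mul_diagonal, Finset.sum_union h, pow_add]

section FanOutConj

variable (c : Fin n) (T : Finset (Fin n)) (hc : c ∉ T)

theorem fanOut_conj_ZPauli_of_disjoint {S : Finset (Fin n)} (h : Disjoint S T) :
    (fanOutPerm c T hc).permMatrix ℂ * ZPauli n S * ((fanOutPerm c T hc).permMatrix ℂ)⁻¹ =
      ZPauli n S := by
  rw [fanOut_conj_ZPauli, Finset.disjoint_iff_inter_eq_empty.mp h, Finset.card_empty, pow_zero,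
    mul_one]

theorem fanOut_conj_ZPauli_pair {a b : Fin n} (hab : a ≠ b) (ha : a ∈ T) (hb : b ∈ T) :
    (fanOutPerm c T hc).permMatrix ℂ * ZPauli n {a, b} * ((fanOutPerm c T hc).permMatrix ℂ)⁻¹ =
      ZPauli n {a, b} := by
  have hsub : {a, b} ⊆ T := Finset.insert_subset ha (Finset.singleton_subset_iff.mpr hb)
  rw [fanOut_conj_ZPauli, Finset.inter_eq_left.mpr hsub, Finset.card_pair hab, pow_two,
    ZPauli_mul_self, mul_one]

theorem fanOut_conj_ZPauli_singleton {a : Fin n} (ha : a ∈ T) :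
    (fanOutPerm c T hc).permMatrix ℂ * ZPauli n {a} * ((fanOutPerm c T hc).permMatrix ℂ)⁻¹ =
      ZPauli n {c, a} := by
  have hca : c ≠ a := fun h => hc (h ▸ ha)
  rw [fanOut_conj_ZPauli, Finset.singleton_inter_of_mem ha, Finset.card_singleton, pow_one,
    ZPauli_mul_of_disjoint (Finset.disjoint_singleton.mpr hca.symm), Finset.union_comm,
    Finset.insert_eq]

end FanOutConj

lemma prod_CNOT_block_eq_permMatrix {a m : ℕ} (c : Fin (a + m)) (hc : c.1 < a) :
    ((List.finRange m).map fun i => CNOT (a + m) c ⟨a + i.1, by omega⟩).prod =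
      (fanOutPerm c {j | a ≤ j.1} (by simpa using hc)).permMatrix ℂ := by
  set L : List (Fin (a + m)) := (List.finRange m).map fun i => ⟨a + i.1, by omega⟩
  have hmem : ∀ j, j ∈ L ↔ a ≤ j.1 := fun j => by
    simp only [L, List.mem_map, List.mem_finRange, true_and, Fin.ext_iff]
    exact ⟨fun ⟨i, hi⟩ => by omega, fun h => ⟨⟨j.1 - a, by omega⟩, by simp; omega⟩⟩
  have hnodup : L.Nodup :=
    (List.nodup_finRange _).map fun i j hij => Fin.ext (by simpa [Fin.ext_iff] using hij)
  have hU := prod_map_CNOT_eq_permMatrix c L (by simpa [hmem] using hc) hnodup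
  rw [List.map_map, Function.comp_def] at hU
  rw [hU]
  congr 2
  ext j
  simp [hmem]

lemma sum_ZPauli_bonds_eq_add (k l : ℕ) (hn : k + l + 2 ≤ n) :
    ∑ i : Fin (k + l + 1), ZPauli n {⟨i.1, by omega⟩, ⟨i.1 + 1, by omega⟩} =
      ∑ i : Fin k, ZPauli n {⟨i.1, by omega⟩, ⟨i.1 + 1, by omega⟩} +
        (ZPauli n {⟨k, by omega⟩, ⟨k + 1, by omega⟩} +
          ∑ i : Fin l, ZPauli n {⟨k + 1 + i.1, by omega⟩, ⟨k + 2 + i.1, by omega⟩}) := by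
  have hsplit := Fin.sum_univ_add (a := k) (b := l + 1) fun i : Fin (k + (l + 1)) =>
    ZPauli n {⟨i.1, by omega⟩, ⟨i.1 + 1, by omega⟩}
  have hidx : ∀ i : Fin l, k + (i.1 + 1) = k + 1 + i.1 ∧ k + 1 + i.1 + 1 = k + 2 + i.1 :=
    fun i => by omega
  simp only [Fin.sum_univ_succ, Fin.val_castAdd, Fin.val_natAdd, Fin.val_succ, Fin.val_zero,
    add_zero, hidx] at hsplit
  exact hsplit

/-- Joining two Ising chains with magnetic fields at their left ends, of lengths `k+1`
and `l+1` (qubits `0,…,k` and `k+1,…,k+l+1` in 0-indexed notation, register size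
`m = k+1+(l+1)`): conjugating
`H = -Z_0 - ∑_{i=0}^{k-1} Z_i Z_{i+1} - Z_{k+1} - ∑_{i=k+1}^{k+l} Z_i Z_{i+1}`
by the depth-1 commuting gateset `∏_{j=k+1}^{k+l+1} CX(k, j)` yields
`H' = -Z_0 - ∑_{i=0}^{k+l} Z_i Z_{i+1}`. -/
theorem stmt16 (k l : ℕ) :
    (((List.finRange (l + 1)).map fun j =>
        CNOT (k + 1 + (l + 1)) ⟨k, by omega⟩ ⟨k + 1 + j.1, by omega⟩).prod)
      * (-(ZPauli (k + 1 + (l + 1)) {⟨0, by omega⟩})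
          - (∑ i : Fin k, ZPauli (k + 1 + (l + 1)) {⟨i.1, by omega⟩, ⟨i.1 + 1, by omega⟩})
          - ZPauli (k + 1 + (l + 1)) {⟨k + 1, by omega⟩}
          - (∑ i : Fin l, ZPauli (k + 1 + (l + 1))
              {⟨k + 1 + i.1, by omega⟩, ⟨k + 2 + i.1, by omega⟩}))
      * (((List.finRange (l + 1)).map fun j =>
          CNOT (k + 1 + (l + 1)) ⟨k, by omega⟩ ⟨k + 1 + j.1, by omega⟩).prod)⁻¹
    = -(ZPauli (k + 1 + (l + 1)) {⟨0, by omega⟩})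
        - (∑ i : Fin (k + l + 1), ZPauli (k + 1 + (l + 1))
            {⟨i.1, by omega⟩, ⟨i.1 + 1, by omega⟩}) := by
  set c : Fin (k + 1 + (l + 1)) := ⟨k, by omega⟩
  set T : Finset (Fin (k + 1 + (l + 1))) := {j | k + 1 ≤ j.1}
  have hmem : ∀ j, j ∈ T ↔ k < j.1 := fun j => by simp [T]
  have hdisj : ∀ S, (∀ j ∈ S, j.1 ≤ k) → Disjoint S T :=
    fun S hS => Finset.disjoint_left.mpr fun j hj hjT => absurd ((hmem j).mp hjT) (hS j hj).not_gt
  rw [prod_CNOT_block_eq_permMatrix c (Nat.lt_succ_self k), ← LinearMap.mulLeftRight_apply (R := ℂ)]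
  simp only [map_sub, map_neg, map_sum, LinearMap.mulLeftRight_apply]
  rw [fanOut_conj_ZPauli_of_disjoint _ _ _ (hdisj _ (by simp)),
    fanOut_conj_ZPauli_singleton _ _ _ ((hmem _).mpr (by simp)),
    Finset.sum_congr rfl fun (i : Fin k) _ =>
      fanOut_conj_ZPauli_of_disjoint _ _ _ (hdisj _ (by simp)),
    Finset.sum_congr rfl fun (i : Fin l) _ =>
      fanOut_conj_ZPauli_pair _ _ _ (by simp) ((hmem _).mpr (by simp; omega))
        ((hmem _).mpr (by simp; omega)),
    sum_ZPauli_bonds_eq_add k l (by omega)]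
  abel
end
end
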